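/- arXiv:1711.06638 — 3 statements merged into one kernel-verified Lean document; each statement's English description precedes it below -/
import Mathlib

section
/- Let (X, d) be a metric space with at least three points and let δ : X → ℝ be a function with δ(x) ≤ underline(d)(x) for all x ∈ X. Then for every x ∈ X, the infimum over all pairs of distinct points y, z ∈ X \ {x} of the Gromov product d_δ(x; y, z) = (d_δ(x, y) + d_δ(x, z) − d_δ(y, z))/2 equals underline(d)(x) − δ(x). In particular, for δ = underline(d) the pseudometric d⁻ = d_δ is trim: all these infima are 0. -/
open scoped Classical

/-- The Gromov product `d(x; y, z) = (d(x,y) + d(x,z) - d(y,z))/2`. -/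
noncomputable def gromov {X : Type*} (d : X → X → ℝ) (x y z : X) : ℝ :=
  (d x y + d x z - d y z) / 2

/-- `underline d x` is the infimum of the Gromov products `d(x; y, z)` over all
pairs of distinct points `y, z` different from `x`. -/
noncomputable def underline {X : Type*} (d : X → X → ℝ) (x : X) : ℝ :=
  sInf {r : ℝ | ∃ y z : X, y ≠ x ∧ z ≠ x ∧ y ≠ z ∧ r = gromov d x y z}

/-- The drifted map `d_δ`: `d_δ(x,x) = 0` and `d_δ(x,y) = d(x,y) - δ(x) - δ(y)` for `x ≠ y`. -/
noncomputable def drift {X : Type*} (d : X → X → ℝ) (δ : X → ℝ) (x y : X) : ℝ :=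
  if x = y then 0 else d x y - δ x - δ y

/-!
Off the diagonal, drifting by `δ` lowers every Gromov product at `x` by the same constant `δ x`
(the terms `δ y` and `δ z` cancel), so the infimum drops by `δ x`. The infimum is a genuine one:
there is an admissible pair as soon as `X` has three points, and Gromov products of a metric are
nonnegative by the triangle inequality.
-/

theorem gromov_drift_of_ne {X : Type*} (d : X → X → ℝ) (δ : X → ℝ) {x y z : X}
    (hy : y ≠ x) (hz : z ≠ x) (hyz : y ≠ z) :
    gromov (drift d δ) x y z = gromov d x y z - δ x := by
  simp only [gromov, drift, if_neg hy.symm, if_neg hz.symm, if_neg hyz]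
  ring

theorem underline_drift {X : Type*} (d : X → X → ℝ) (δ : X → ℝ) (x : X)
    (hne : ∃ y z : X, y ≠ x ∧ z ≠ x ∧ y ≠ z)
    (hbdd : ∃ m : ℝ, ∀ y z : X, y ≠ x → z ≠ x → y ≠ z → m ≤ gromov d x y z) :
    underline (drift d δ) x = underline d x - δ x := by
  set S : Set ℝ := {r | ∃ y z : X, y ≠ x ∧ z ≠ x ∧ y ≠ z ∧ r = gromov d x y z}
  have hS : S.Nonempty := by
    obtain ⟨y, z, hy, hz, hyz⟩ := hne
    exact ⟨_, y, z, hy, hz, hyz, rfl⟩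
  have hSbdd : BddBelow S := by
    obtain ⟨m, hm⟩ := hbdd
    exact ⟨m, by rintro _ ⟨y, z, hy, hz, hyz, rfl⟩; exact hm y z hy hz hyz⟩
  have hshift : {r | ∃ y z : X, y ≠ x ∧ z ≠ x ∧ y ≠ z ∧ r = gromov (drift d δ) x y z} =
      OrderIso.addRight (-δ x) '' S := by
    ext r
    simp only [S, Set.mem_ofPred_eq, Set.mem_image, OrderIso.addRight_apply]
    constructor
    · rintro ⟨y, z, hy, hz, hyz, rfl⟩
      exact ⟨_, ⟨y, z, hy, hz, hyz, rfl⟩, by rw [gromov_drift_of_ne d δ hy hz hyz, sub_eq_add_neg]⟩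
    · rintro ⟨_, ⟨y, z, hy, hz, hyz, rfl⟩, rfl⟩
      exact ⟨y, z, hy, hz, hyz, by rw [gromov_drift_of_ne d δ hy hz hyz, sub_eq_add_neg]⟩
  rw [underline, underline, hshift, ← OrderIso.map_csInf' _ hS hSbdd, OrderIso.addRight_apply,
    sub_eq_add_neg]

theorem gromov_dist_nonneg {X : Type*} [PseudoMetricSpace X] (x y z : X) :
    0 ≤ gromov (fun a b => dist a b) x y z := by
  have := dist_triangle_left y z x
  unfold gromov
  linarith

theorem exists_pair_ne_ne_of_three {X : Type*} (h3 : ∃ a b c : X, a ≠ b ∧ a ≠ c ∧ b ≠ c) (x : X) :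
    ∃ y z : X, y ≠ x ∧ z ≠ x ∧ y ≠ z := by
  obtain ⟨a, b, c, hab, hac, hbc⟩ := h3
  by_cases hax : a = x
  · exact ⟨b, c, hax ▸ hab.symm, hax ▸ hac.symm, hbc⟩
  by_cases hbx : b = x
  · exact ⟨a, c, hax, hbx ▸ hbc.symm, hac⟩
  exact ⟨a, b, hax, hbx, hab⟩

theorem stmt2_general {X : Type*} [MetricSpace X]
    (h3 : ∃ a b c : X, a ≠ b ∧ a ≠ c ∧ b ≠ c)
    (δ : X → ℝ) :
    (∀ x : X, underline (drift (fun a b => dist a b) δ) x =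
      underline (fun a b => dist a b) x - δ x) ∧
    (∀ x : X,
      underline (drift (fun a b => dist a b) (underline (fun a b => dist a b))) x = 0) := by
  have key (δ : X → ℝ) (x : X) :
      underline (drift (fun a b => dist a b) δ) x = underline (fun a b => dist a b) x - δ x :=
    underline_drift _ δ x (exists_pair_ne_ne_of_three h3 x)
      ⟨0, fun y z _ _ _ => gromov_dist_nonneg x y z⟩
  exact ⟨key δ, fun x => (key _ x).trans (sub_self _)⟩

theorem stmt2 {X : Type*} [MetricSpace X]
    (h3 : ∃ a b c : X, a ≠ b ∧ a ≠ c ∧ b ≠ c)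
    (δ : X → ℝ) (hδ : ∀ x : X, δ x ≤ underline (fun a b => dist a b) x) :
    (∀ x : X, underline (drift (fun a b => dist a b) δ) x =
      underline (fun a b => dist a b) x - δ x) ∧
    (∀ x : X,
      underline (drift (fun a b => dist a b) (underline (fun a b => dist a b))) x = 0) :=
  stmt2_general h3 δ
end

section
/- Let ((X_k, d_k), p_k, u_k) be a trimming sequence. If there exist x₀, y₀ ∈ X_0 with (x₀)_{(k)} ≠ (y₀)_{(k)} for all k, then for every x ∈ X_0 the series σ(x) = Σ_{k=0}^{∞} u_k(x_{(k)}) converges. -/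
/-!
While two trajectories stay apart, condition (a) telescopes to
`d_n(a_(n), b_(n)) = d_0(a, b) - σⁿ(a) - σⁿ(b)`, so the partial sums `σⁿ(a)` are bounded by
`d_0(a, b)`. Hence `σ(x₀)` converges, and so does `σ(x)` for every `x` whose trajectory never
meets that of `x₀`; a trajectory that does meet it coincides with it from then on, so its
series has the same tail as `σ(x₀)`.
-/

/-- The trimming sequence of a point: `traj p x 0 = x` and `traj p x (k+1) = p k (traj p x k)`. -/
def traj {X : ℕ → Type*} (p : ∀ k, X k → X (k + 1)) (x : X 0) : ∀ k, X k
  | 0 => x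
  | k + 1 => p k (traj p x k)

theorem traj_eq_of_le {X : ℕ → Type*} (p : ∀ k, X k → X (k + 1)) {x y : X 0} {N m : ℕ}
    (hN : traj p x N = traj p y N) (hm : N ≤ m) : traj p x m = traj p y m := by
  induction m, hm using Nat.le_induction with
  | base => exact hN
  | succ m _ ih => exact congrArg (p m) ih

section Telescoping

variable {X : ℕ → Type*} [∀ k, MetricSpace (X k)] (p : ∀ k, X k → X (k + 1)) (u : ∀ k, X k → ℝ)
  {a b : X 0}

theorem dist_traj_eq_sub_sum
    (ha : ∀ k (x y : X k), p k x ≠ p k y → dist (p k x) (p k y) = dist x y - u k x - u k y)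
    (hab : ∀ k, traj p a k ≠ traj p b k) (n : ℕ) :
    dist (traj p a n) (traj p b n) =
      dist a b - ∑ k ∈ Finset.range n, u k (traj p a k) - ∑ k ∈ Finset.range n, u k (traj p b k) := by
  induction n with
  | zero => simp [traj]
  | succ n ih =>
    rw [Finset.sum_range_succ, Finset.sum_range_succ]
    calc dist (traj p a (n + 1)) (traj p b (n + 1))
        = dist (traj p a n) (traj p b n) - u n (traj p a n) - u n (traj p b n) :=
          ha n _ _ (hab (n + 1))
      _ = _ := by rw [ih]; ring

theorem summable_of_forall_traj_ne
    (ha : ∀ k (x y : X k), p k x ≠ p k y → dist (p k x) (p k y) = dist x y - u k x - u k y)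
    (hu : ∀ k (x : X k), 0 ≤ u k x)
    (hab : ∀ k, traj p a k ≠ traj p b k) : Summable fun k => u k (traj p a k) := by
  refine summable_of_sum_range_le (c := dist a b) (fun k => hu k _) fun n => ?_
  have hb : 0 ≤ ∑ k ∈ Finset.range n, u k (traj p b k) := Finset.sum_nonneg fun k _ => hu k _
  linarith [dist_traj_eq_sub_sum p u ha hab n, dist_nonneg (x := traj p a n) (y := traj p b n)]

end Telescoping

theorem stmt7_general {X : ℕ → Type*} [∀ k, MetricSpace (X k)]
    (p : ∀ k, X k → X (k + 1)) (u : ∀ k, X k → ℝ)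
    (hu : ∀ k (x : X k), 0 ≤ u k x)
    (ha : ∀ k (x y : X k), p k x ≠ p k y →
      dist (p k x) (p k y) = dist x y - u k x - u k y)
    (hsep : ∃ x₀ y₀ : X 0, ∀ k, traj p x₀ k ≠ traj p y₀ k) :
    ∀ x : X 0, Summable (fun k => u k (traj p x k)) := by
  obtain ⟨x₀, y₀, hsep⟩ := hsep
  intro x
  by_cases hmeet : ∃ N, traj p x N = traj p x₀ N
  · obtain ⟨N, hN⟩ := hmeet
    refine (summable_of_forall_traj_ne p u ha hu hsep).congr_atTop ?_
    filter_upwards [Filter.eventually_ge_atTop N] with m hm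
    rw [traj_eq_of_le p hN hm]
  · rw [not_exists] at hmeet
    exact summable_of_forall_traj_ne p u ha hu hmeet

theorem stmt7 {X : ℕ → Type*} [∀ k, MetricSpace (X k)]
    (p : ∀ k, X k → X (k + 1)) (u : ∀ k, X k → ℝ)
    (hsurj : ∀ k, Function.Surjective (p k))
    (hu : ∀ k (x : X k), 0 ≤ u k x)
    (ha : ∀ k (x y : X k), p k x ≠ p k y →
      dist (p k x) (p k y) = dist x y - u k x - u k y)
    (hb : ∀ k (x y : X k), x ≠ y → p k x = p k y → dist x y = u k x + u k y)
    (hsep : ∃ x₀ y₀ : X 0, ∀ k, traj p x₀ k ≠ traj p y₀ k) :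
    ∀ x : X 0, Summable (fun k => u k (traj p x k)) :=
  stmt7_general p u hu ha hsep
end

section
/- Let ((X_k, d_k), p_k, u_k) be a trimming sequence with X_0 nonempty such that: for all x, y ∈ X_0 there exists k with x_{(k)} = y_{(k)}; u_k vanishes identically on X_k whenever X_k has at most one point; and the series σ(x) = Σ_{k=0}^{∞} u_k(x_{(k)}) converges for every x ∈ X_0. Then σ ∈ T(X_0, d_0), and σ is the unique element of T(X_0, d_0) majorating all partial sums: any g ∈ T(X_0, d_0) with σ^n(x) ≤ g(x) for all n ∈ ℕ and all x ∈ X_0 equals σ. -/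
/-- The tight span of a pseudometric `d` on `X`. -/
def TightSpan {X : Type*} (d : X → X → ℝ) : Set (X → ℝ) :=
  {f | (∀ x, 0 ≤ f x) ∧ (∀ x y, d x y ≤ f x + f y) ∧
    ∀ x, ∀ ε : ℝ, 0 < ε → ∃ y, f x + f y ≤ d x y + ε}

theorem TightSpan.eq_of_le {X : Type*} {d : X → X → ℝ} {f g : X → ℝ}
    (hf : ∀ x y, d x y ≤ f x + f y) (hg : g ∈ TightSpan d) (hfg : f ≤ g) : g = f := by
  funext x
  refine le_antisymm (le_of_forall_pos_le_add fun ε hε => ?_) (hfg x)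
  obtain ⟨y, hy⟩ := hg.2.2 x ε hε
  linarith [hf x y, hfg y]

section Trajectory

variable {X : ℕ → Type*} (p : ∀ k, X k → X (k + 1))

theorem traj_succ (x : X 0) (k : ℕ) : traj p x (k + 1) = p k (traj p x k) := rfl

theorem traj_eq_of_le_s19 {x y : X 0} {j k : ℕ} (hjk : j ≤ k) (h : traj p x j = traj p y j) :
    traj p x k = traj p y k := by
  induction k, hjk using Nat.le_induction with
  | base => exact h
  | succ k _ ih => rw [traj_succ, traj_succ, ih]

theorem traj_surjective (hsurj : ∀ k, Function.Surjective (p k)) :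
    ∀ k, Function.Surjective (fun x : X 0 => traj p x k)
  | 0 => fun a => ⟨a, rfl⟩
  | k + 1 => fun a => by
      obtain ⟨b, rfl⟩ := hsurj k a
      obtain ⟨x, rfl⟩ := traj_surjective hsurj k b
      exact ⟨x, rfl⟩

theorem exists_traj_ne (hsurj : ∀ k, Function.Surjective (p k)) (x : X 0) (k : ℕ)
    [Nontrivial (X k)] : ∃ y, traj p x k ≠ traj p y k := by
  obtain ⟨b, hb⟩ := exists_ne (traj p x k)
  obtain ⟨y, rfl⟩ := traj_surjective p hsurj k b
  exact ⟨y, hb.symm⟩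

variable (u : ∀ k, X k → ℝ)

/-- The partial sum `σⁿ(x)`. -/
def partialTrimSum (n : ℕ) (x : X 0) : ℝ := ∑ k ∈ Finset.range n, u k (traj p x k)

/-- The sum `σ(x)`; the junk value `0` when the series diverges. -/
noncomputable def trimSum (x : X 0) : ℝ := ∑' k, u k (traj p x k)

variable {p u}

theorem partialTrimSum_mono (hu : ∀ k (x : X k), 0 ≤ u k x) (x : X 0) :
    Monotone fun n => partialTrimSum p u n x :=
  fun _ _ hmn => Finset.sum_le_sum_of_subset_of_nonneg (Finset.range_mono hmn)
    fun _ _ _ => hu _ _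

theorem tendsto_partialTrimSum {x : X 0} (hx : Summable fun k => u k (traj p x k)) :
    Filter.Tendsto (fun n => partialTrimSum p u n x) Filter.atTop (nhds (trimSum p u x)) :=
  hx.hasSum.tendsto_sum_nat

theorem partialTrimSum_le_trimSum (hu : ∀ k (x : X k), 0 ≤ u k x) {x : X 0}
    (hx : Summable fun k => u k (traj p x k)) (n : ℕ) : partialTrimSum p u n x ≤ trimSum p u x :=
  hx.sum_le_tsum _ fun _ _ => hu _ _

theorem trimSum_sub_partialTrimSum_eq {x y : X 0} (hx : Summable fun k => u k (traj p x k))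
    (hy : Summable fun k => u k (traj p y k)) {n : ℕ} (h : traj p x n = traj p y n) :
    trimSum p u x - partialTrimSum p u n x = trimSum p u y - partialTrimSum p u n y := by
  have hx_split := hx.sum_add_tsum_nat_add n
  have hy_split := hy.sum_add_tsum_nat_add n
  have htail : ∑' k, u (k + n) (traj p x (k + n)) = ∑' k, u (k + n) (traj p y (k + n)) :=
    tsum_congr fun k => by rw [traj_eq_of_le_s19 p (Nat.le_add_left n k) h]
  simp only [trimSum, partialTrimSum]
  linarith

end Trajectory

section TrimmingSequence

variable {X : ℕ → Type*} [∀ k, MetricSpace (X k)] {p : ∀ k, X k → X (k + 1)} {u : ∀ k, X k → ℝ}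
  (ha : ∀ k (x y : X k), p k x ≠ p k y → dist (p k x) (p k y) = dist x y - u k x - u k y)
  (hb : ∀ k (x y : X k), x ≠ y → p k x = p k y → dist x y = u k x + u k y)
include ha hb

theorem dist_eq_add_dist_of_ne {k : ℕ} {a b : X k} (hab : a ≠ b) :
    dist a b = u k a + u k b + dist (p k a) (p k b) := by
  by_cases h : p k a = p k b
  · rw [h, dist_self, hb k a b hab h, add_zero]
  · linarith [ha k a b h]

theorem dist_eq_partialTrimSum_add_dist {x y : X 0} {n : ℕ}
    (hne : ∀ j < n, traj p x j ≠ traj p y j) :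
    dist x y = partialTrimSum p u n x + partialTrimSum p u n y
      + dist (traj p x n) (traj p y n) := by
  induction n with
  | zero => simp [partialTrimSum, traj]
  | succ n ih =>
    rw [ih fun j hj => hne j (by omega), dist_eq_add_dist_of_ne ha hb (hne n n.lt_succ_self)]
    simp only [partialTrimSum, Finset.sum_range_succ, traj_succ]
    ring

variable (hmeet : ∀ x y : X 0, ∃ k, traj p x k = traj p y k)
include hmeet

theorem exists_traj_eq_and_dist_eq (x y : X 0) :
    ∃ M, traj p x M = traj p y M ∧
      dist x y = partialTrimSum p u M x + partialTrimSum p u M y := by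
  classical
  refine ⟨Nat.find (hmeet x y), Nat.find_spec (hmeet x y), ?_⟩
  rw [dist_eq_partialTrimSum_add_dist ha hb fun j hj => Nat.find_min (hmeet x y) hj,
    Nat.find_spec (hmeet x y), dist_self, add_zero]

variable (hu : ∀ k (x : X k), 0 ≤ u k x)
  (hconv : ∀ x : X 0, Summable (fun k => u k (traj p x k)))
include hu hconv

theorem dist_le_trimSum_add_trimSum (x y : X 0) : dist x y ≤ trimSum p u x + trimSum p u y := by
  obtain ⟨M, -, hM⟩ := exists_traj_eq_and_dist_eq ha hb hmeet x y
  rw [hM]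
  exact add_le_add (partialTrimSum_le_trimSum hu (hconv x) M)
    (partialTrimSum_le_trimSum hu (hconv y) M)

theorem trimSum_add_trimSum_le_of_traj_ne {x y : X 0} {n : ℕ}
    (hne : traj p x n ≠ traj p y n) :
    trimSum p u x + trimSum p u y
      ≤ dist x y + 2 * (trimSum p u x - partialTrimSum p u (n + 1) x) := by
  obtain ⟨M, hxyM, hM⟩ := exists_traj_eq_and_dist_eq ha hb hmeet x y
  have hnM : n + 1 ≤ M := by
    by_contra h
    exact hne (traj_eq_of_le_s19 p (by omega) hxyM)
  have htail := trimSum_sub_partialTrimSum_eq (hconv x) (hconv y) hxyM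
  have hmono : partialTrimSum p u (n + 1) x ≤ partialTrimSum p u M x :=
    partialTrimSum_mono hu x hnM
  linarith

theorem exists_trimSum_add_trimSum_le (hsurj : ∀ k, Function.Surjective (p k))
    (hvanish : ∀ k, (∀ a b : X k, a = b) → ∀ a : X k, u k a = 0) (x : X 0) (n : ℕ) :
    ∃ y, trimSum p u x + trimSum p u y
      ≤ dist x y + 2 * (trimSum p u x - partialTrimSum p u n x) := by
  induction n with
  | zero => exact ⟨x, by simp [partialTrimSum, two_mul]⟩
  | succ n ih =>
    rcases subsingleton_or_nontrivial (X n) with hX | hX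
    · have hstep : partialTrimSum p u (n + 1) x = partialTrimSum p u n x := by
        rw [partialTrimSum, Finset.sum_range_succ, hvanish n Subsingleton.elim, add_zero]
        rfl
      rwa [hstep]
    · obtain ⟨y, hy⟩ := exists_traj_ne p hsurj x n
      exact ⟨y, trimSum_add_trimSum_le_of_traj_ne ha hb hmeet hu hconv hy⟩

theorem trimSum_mem_tightSpan (hsurj : ∀ k, Function.Surjective (p k))
    (hvanish : ∀ k, (∀ a b : X k, a = b) → ∀ a : X k, u k a = 0) :
    trimSum p u ∈ TightSpan (fun x y : X 0 => dist x y) := by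
  refine ⟨fun x => tsum_nonneg fun k => hu _ _,
    dist_le_trimSum_add_trimSum ha hb hmeet hu hconv, fun x ε hε => ?_⟩
  obtain ⟨n, hn⟩ := ((tendsto_partialTrimSum (hconv x)).eventually
    (eventually_gt_nhds (by linarith : trimSum p u x - ε / 2 < trimSum p u x))).exists
  obtain ⟨y, hy⟩ := exists_trimSum_add_trimSum_le ha hb hmeet hu hconv hsurj hvanish x n
  exact ⟨y, by linarith⟩

theorem eq_trimSum_of_partialTrimSum_le {g : X 0 → ℝ}
    (hg : g ∈ TightSpan (fun x y : X 0 => dist x y)) (hle : ∀ n x, partialTrimSum p u n x ≤ g x) :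
    g = trimSum p u :=
  TightSpan.eq_of_le (dist_le_trimSum_add_trimSum ha hb hmeet hu hconv) hg fun x =>
    le_of_tendsto' (tendsto_partialTrimSum (hconv x)) fun n => hle n x

end TrimmingSequence

theorem stmt19_general {X : ℕ → Type*} [∀ k, MetricSpace (X k)]
    (p : ∀ k, X k → X (k + 1)) (u : ∀ k, X k → ℝ)
    (hsurj : ∀ k, Function.Surjective (p k))
    (hu : ∀ k (x : X k), 0 ≤ u k x)
    (ha : ∀ k (x y : X k), p k x ≠ p k y →
      dist (p k x) (p k y) = dist x y - u k x - u k y)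
    (hb : ∀ k (x y : X k), x ≠ y → p k x = p k y → dist x y = u k x + u k y)
    (hmeet : ∀ x y : X 0, ∃ k, traj p x k = traj p y k)
    (hvanish : ∀ k, (∀ a b : X k, a = b) → ∀ a : X k, u k a = 0)
    (hconv : ∀ x : X 0, Summable (fun k => u k (traj p x k)))
    (σ : X 0 → ℝ) (hσ : ∀ x, σ x = ∑' k, u k (traj p x k)) :
    σ ∈ TightSpan (fun x y : X 0 => dist x y) ∧
    ∀ g ∈ TightSpan (fun x y : X 0 => dist x y),
      (∀ (n : ℕ) (x : X 0), (∑ k ∈ Finset.range n, u k (traj p x k)) ≤ g x) →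
      g = σ := by
  obtain rfl : σ = trimSum p u := funext hσ
  exact ⟨trimSum_mem_tightSpan ha hb hmeet hu hconv hsurj hvanish,
    fun g hg hle => eq_trimSum_of_partialTrimSum_le ha hb hmeet hu hconv hg hle⟩

theorem stmt19 {X : ℕ → Type*} [∀ k, MetricSpace (X k)]
    [Nonempty (X 0)]
    (p : ∀ k, X k → X (k + 1)) (u : ∀ k, X k → ℝ)
    (hsurj : ∀ k, Function.Surjective (p k))
    (hu : ∀ k (x : X k), 0 ≤ u k x)
    (ha : ∀ k (x y : X k), p k x ≠ p k y →
      dist (p k x) (p k y) = dist x y - u k x - u k y)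
    (hb : ∀ k (x y : X k), x ≠ y → p k x = p k y → dist x y = u k x + u k y)
    (hmeet : ∀ x y : X 0, ∃ k, traj p x k = traj p y k)
    (hvanish : ∀ k, (∀ a b : X k, a = b) → ∀ a : X k, u k a = 0)
    (hconv : ∀ x : X 0, Summable (fun k => u k (traj p x k)))
    (σ : X 0 → ℝ) (hσ : ∀ x, σ x = ∑' k, u k (traj p x k)) :
    σ ∈ TightSpan (fun x y : X 0 => dist x y) ∧
    ∀ g ∈ TightSpan (fun x y : X 0 => dist x y),
      (∀ (n : ℕ) (x : X 0), (∑ k ∈ Finset.range n, u k (traj p x k)) ≤ g x) →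
      g = σ :=
  stmt19_general p u hsurj hu ha hb hmeet hvanish hconv σ hσ
end
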